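/- arXiv:2301.00902 — 2 statements merged into one kernel-verified Lean document; each statement's English description precedes it below -/
import Mathlib

section
/- Assume the positivity condition θ_k ∈ (0,π) for all 1 ≤ k ≤ N, ∑_{k=1}^N θ_k = 2π, and N ≥ 5. Then D_0 ∩ Δ̄ = ⋃_{I ⊆ {1,…,N}, |I| = N−2} D_0 ∩ F_I. Moreover, for I = {1,…,N}∖{a,b} with 1 ≤ a < b ≤ N, one has D_0 ∩ F_I ≠ {0} if and only if b − a ∉ {1, N−1} (i.e., a and b are not cyclically adjacent) and sin(φ_b − φ_a) = 0. -/
/-- The cumulative angle `φ_k = ∑_{a=1}^k θ_a`. -/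
noncomputable def phiAng (θ : ℕ → ℝ) (k : ℕ) : ℝ := ∑ a ∈ Finset.Icc 1 k, θ a

/-- The signed-area quadratic form `Q` on `ℝ^{N-2}` (coordinates indexed `1,…,N-2`). -/
noncomputable def Qform (N : ℕ) (θ : ℕ → ℝ) (lam : ℕ → ℝ) : ℝ :=
  -(1/2) * ∑ j ∈ Finset.Icc 1 (N-2),
      Real.sin (phiAng θ N - phiAng θ j) * Real.sin (phiAng θ (N-1) - phiAng θ j)
        / Real.sin (θ N) * (lam j)^2
  - ∑ j ∈ Finset.Icc 1 (N-2), ∑ k ∈ Finset.Icc (j+1) (N-2),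
      Real.sin (phiAng θ N - phiAng θ j) * Real.sin (phiAng θ (N-1) - phiAng θ k)
        / Real.sin (θ N) * (lam j * lam k)

/-- The vector `v`, `v_j = -sin(φ_N - φ_j)/sin(θ_N)`. -/
noncomputable def vvec (N : ℕ) (θ : ℕ → ℝ) (j : ℕ) : ℝ :=
  -(Real.sin (phiAng θ N - phiAng θ j)) / Real.sin (θ N)

/-- The vector `w`, `w_j = sin(φ_{N-1} - φ_j)/sin(θ_N)`. -/
noncomputable def wvec (N : ℕ) (θ : ℕ → ℝ) (j : ℕ) : ℝ :=
  Real.sin (phiAng θ (N-1) - phiAng θ j) / Real.sin (θ N)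

/-- The extended side lengths: `λ_k` for `k ≤ N-2`, `λ_{N-1} = vᵀλ`, `λ_N = wᵀλ`. -/
noncomputable def lamExt (N : ℕ) (θ : ℕ → ℝ) (lam : ℕ → ℝ) (k : ℕ) : ℝ :=
  if k = N - 1 then ∑ j ∈ Finset.Icc 1 (N-2), vvec N θ j * lam j
  else if k = N then ∑ j ∈ Finset.Icc 1 (N-2), wvec N θ j * lam j
  else lam k

/-- Vectors in `ℝ^{N-2}` modelled as functions `ℕ → ℝ` supported on `{1,…,N-2}`. -/
def suppOK (N : ℕ) (lam : ℕ → ℝ) : Prop := ∀ k, k ∉ Finset.Icc 1 (N-2) → lam k = 0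

/-- The closed double cone `Δ̄` of vectors with all extended coordinates `≥ 0` or all `≤ 0`. -/
def DeltaBar (N : ℕ) (θ : ℕ → ℝ) : Set (ℕ → ℝ) :=
  {lam | suppOK N lam ∧
    ((∀ k, 1 ≤ k → k ≤ N → 0 ≤ lamExt N θ lam k) ∨
     (∀ k, 1 ≤ k → k ≤ N → lamExt N θ lam k ≤ 0))}

/-- The isotropic set `D_0 = {λ : Q(λ) = 0}`. -/
def Dzero (N : ℕ) (θ : ℕ → ℝ) : Set (ℕ → ℝ) := {lam | suppOK N lam ∧ Qform N θ lam = 0}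

/-- The coordinate subspace `V_I = {λ : λ_j = 0 for j ∈ I}`. -/
def Vface (N : ℕ) (θ : ℕ → ℝ) (I : Finset ℕ) : Set (ℕ → ℝ) :=
  {lam | suppOK N lam ∧ ∀ j ∈ I, lamExt N θ lam j = 0}

/-- The face `F_I = V_I ∩ Δ̄`. -/
def Fface (N : ℕ) (θ : ℕ → ℝ) (I : Finset ℕ) : Set (ℕ → ℝ) := Vface N θ I ∩ DeltaBar N θ

open Finset Real

/-!
The extended coordinates `ℓ_k = lamExt N θ λ k` are the side lengths of a closed polygon whose
`k`-th side points in direction `φ_k`: `∑ ℓ_k sin (φ_k - x) = 0` for every `x`, and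
`2 Q(λ) = ∑_{k<j} ℓ_k ℓ_j sin (φ_j - φ_k)` is twice its signed area. The directions increase
through less than a full turn, so on `Δ̄` the polygon is convex: for every `k`, the partial sums
of `ℓ_j sin (φ_j - φ_k)` taken cyclically from `k` are nonnegative, and their sum against the
weights `ℓ_k` is `2 Q(λ)`. Hence `Q(λ) = 0` forces `ℓ_j ℓ_k sin (φ_j - φ_k) = 0` for all `j, k`:
any two nonzero sides are opposite, so at most two sides are nonzero. Conversely two opposite
unit sides `a, b` form a closed degenerate polygon; they cannot be cyclically adjacent because
every `θ_k` is less than `π`.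
-/

lemma eq_pi_of_sin_eq_zero {x : ℝ} (h0 : 0 < x) (h2 : x < 2 * π) (h : sin x = 0) : x = π := by
  have : x - π = 0 :=
    (sin_eq_zero_iff_of_lt_of_lt (by linarith) (by linarith)).mp (by rw [sin_sub_pi, h, neg_zero])
  linarith

lemma sin_sub_mul_sin_sub_sub_sin_sub_mul_sin_sub (P Q x y : ℝ) :
    sin (P - y) * sin (Q - x) - sin (P - x) * sin (Q - y) = sin (P - Q) * sin (y - x) := by
  simp only [sin_sub]; ring

lemma sum_filter_mul_sin_nonneg {ι : Type*} (s : Finset ι) (ℓ α : ι → ℝ)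
    (hℓ : ∀ j ∈ s, 0 ≤ ℓ j) (hα : ∀ j ∈ s, α j ∈ Set.Icc 0 (2 * π))
    (htot : ∑ j ∈ s, ℓ j * sin (α j) = 0) (β : ℝ) :
    0 ≤ ∑ j ∈ s with α j ≤ β, ℓ j * sin (α j) := by
  rcases le_or_gt β π with hβ | hβ
  · refine sum_nonneg fun j hj => ?_
    obtain ⟨hjs, hjβ⟩ := mem_filter.mp hj
    exact mul_nonneg (hℓ j hjs) (sin_nonneg_of_nonneg_of_le_pi (hα j hjs).1 (hjβ.trans hβ))
  · have hrest : ∑ j ∈ s with ¬ α j ≤ β, ℓ j * sin (α j) ≤ 0 := by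
      refine sum_nonpos fun j hj => ?_
      obtain ⟨hjs, hjβ⟩ := mem_filter.mp hj
      refine mul_nonpos_of_nonneg_of_nonpos (hℓ j hjs) ?_
      rw [← sin_sub_two_pi]
      exact sin_nonpos_of_nonpos_of_neg_pi_le (by linarith [(hα j hjs).2]) (by linarith)
    linarith [sum_filter_add_sum_filter_not s (fun j => α j ≤ β) (fun j => ℓ j * sin (α j))]

lemma Icc_one_eq_Ioc_zero (m : ℕ) : Icc 1 m = Ioc 0 m := Icc_add_one_left_eq_Ioc 0 m

lemma sum_mul_sum_eq_sum_add_sum_sum_Ioc {R : Type*} [CommRing R] (a b : ℕ → R) (n : ℕ) :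
    (∑ j ∈ Icc 1 n, a j) * ∑ j ∈ Icc 1 n, b j
      = ∑ j ∈ Icc 1 n, a j * b j + ∑ j ∈ Icc 1 n, ∑ k ∈ Ioc j n, (a j * b k + a k * b j) := by
  induction n with
  | zero => simp
  | succ n ih =>
    have hinner : ∀ j ∈ Icc 1 n, ∑ k ∈ Ioc j (n + 1), (a j * b k + a k * b j)
        = ∑ k ∈ Ioc j n, (a j * b k + a k * b j) + (a j * b (n + 1) + a (n + 1) * b j) :=
      fun j hj => sum_Ioc_succ_top (mem_Icc.mp hj).2 _
    rw [sum_Icc_succ_top (by omega), sum_Icc_succ_top (by omega), sum_Icc_succ_top (by omega),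
      sum_Icc_succ_top (by omega), sum_congr rfl hinner, Ioc_self, sum_empty, sum_add_distrib,
      sum_add_distrib, ← sum_mul, ← mul_sum]
    linear_combination ih

noncomputable def turnAngle (ψ : ℕ → ℝ) (k j : ℕ) : ℝ :=
  if k < j then ψ j - ψ k else ψ j - ψ k + 2 * π

@[simp]
lemma sin_turnAngle (ψ : ℕ → ℝ) (k j : ℕ) : sin (turnAngle ψ k j) = sin (ψ j - ψ k) := by
  unfold turnAngle; split_ifs <;> simp [sin_add_two_pi]

section ClosedPolygon

variable {n : ℕ} {ψ ℓ : ℕ → ℝ}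

lemma sub_lt_two_pi (hmono : StrictMonoOn ψ (Set.Icc 1 n)) (hturn : ψ n - ψ 1 < 2 * π)
    {i j : ℕ} (hi : i ∈ Set.Icc 1 n) (hj : j ∈ Set.Icc 1 n) : ψ j - ψ i < 2 * π := by
  have h1 : ψ 1 ≤ ψ i := (hmono.le_iff_le ⟨le_rfl, hi.1.trans hi.2⟩ hi).mpr hi.1
  have h2 : ψ j ≤ ψ n := (hmono.le_iff_le hj ⟨hj.1.trans hj.2, le_rfl⟩).mpr hj.2
  linarith

lemma turnAngle_mem_Icc (hmono : StrictMonoOn ψ (Set.Icc 1 n)) (hturn : ψ n - ψ 1 < 2 * π)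
    {k j : ℕ} (hk : k ∈ Set.Icc 1 n) (hj : j ∈ Set.Icc 1 n) :
    turnAngle ψ k j ∈ Set.Icc 0 (2 * π) := by
  have hkj := sub_lt_two_pi hmono hturn hk hj
  have hjk := sub_lt_two_pi hmono hturn hj hk
  unfold turnAngle
  split_ifs with h
  · have := hmono hk hj h
    constructor <;> linarith
  · have := (hmono.le_iff_le hj hk).mpr (not_lt.mp h)
    constructor <;> linarith

lemma filter_turnAngle_le_eq_Ioc (hmono : StrictMonoOn ψ (Set.Icc 1 n))
    (hturn : ψ n - ψ 1 < 2 * π) {k τ : ℕ} (hτ : τ ∈ Set.Icc 1 n) (hkτ : k < τ) :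
    {j ∈ Icc 1 n | turnAngle ψ k j ≤ turnAngle ψ k τ} = Ioc k τ := by
  have hτn := hτ.2
  ext j
  simp only [mem_filter, mem_Icc, mem_Ioc, turnAngle, if_pos hkτ]
  constructor
  · rintro ⟨hj, hle⟩
    split_ifs at hle with hkj
    · exact ⟨hkj, (hmono.le_iff_le hj hτ).mp (by linarith)⟩
    · linarith [sub_lt_two_pi hmono hturn hj hτ]
  · rintro ⟨hkj, hjτ⟩
    refine ⟨⟨by omega, by omega⟩, ?_⟩
    rw [if_pos hkj]
    linarith [(hmono.le_iff_le ⟨by omega, by omega⟩ hτ).mpr hjτ]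

lemma filter_turnAngle_le_eq_union (hmono : StrictMonoOn ψ (Set.Icc 1 n))
    (hturn : ψ n - ψ 1 < 2 * π) {k τ : ℕ} (hτ : τ ∈ Set.Icc 1 n) (hτk : τ ≤ k) :
    {j ∈ Icc 1 n | turnAngle ψ k j ≤ turnAngle ψ k τ} = Ioc k n ∪ Icc 1 τ := by
  have hτn := hτ.2
  ext j
  simp only [mem_filter, mem_Icc, mem_Ioc, mem_union, turnAngle, if_neg (not_lt.mpr hτk)]
  constructor
  · rintro ⟨hj, hle⟩
    split_ifs at hle with hkj
    · exact Or.inl ⟨hkj, hj.2⟩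
    · exact Or.inr ⟨hj.1, (hmono.le_iff_le hj hτ).mp (by linarith)⟩
  · rintro (⟨hkj, hjn⟩ | ⟨hj1, hjτ⟩)
    · refine ⟨⟨by omega, hjn⟩, ?_⟩
      rw [if_pos hkj]
      linarith [sub_lt_two_pi hmono hturn hτ ⟨by omega, hjn⟩]
    · refine ⟨⟨hj1, by omega⟩, ?_⟩
      rw [if_neg (by omega)]
      linarith [(hmono.le_iff_le ⟨hj1, by omega⟩ hτ).mpr hjτ]

lemma sum_Ioc_add_sum_Icc_nonneg (hmono : StrictMonoOn ψ (Set.Icc 1 n))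
    (hturn : ψ n - ψ 1 < 2 * π) (hℓ : ∀ j ∈ Icc 1 n, 0 ≤ ℓ j)
    (hclose : ∀ k ∈ Icc 1 n, ∑ j ∈ Icc 1 n, ℓ j * sin (ψ j - ψ k) = 0)
    {k τ : ℕ} (hk : k ∈ Icc 1 n) (hτ : τ ≤ n) :
    0 ≤ ∑ j ∈ Ioc k n, ℓ j * sin (ψ j - ψ k) + ∑ j ∈ Icc 1 τ, ℓ j * sin (ψ j - ψ k) := by
  set c : ℕ → ℝ := fun j => ℓ j * sin (ψ j - ψ k)
  have hk' := mem_Icc.mp hk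
  have htot : ∑ j ∈ Icc 1 n, c j = 0 := hclose k hk
  suffices h : ∀ τ ∈ Set.Icc 1 n, 0 ≤ ∑ j ∈ Ioc k n, c j + ∑ j ∈ Icc 1 τ, c j by
    obtain rfl | hτ1 := Nat.eq_zero_or_pos τ
    · simpa [htot] using h n ⟨hk'.1.trans hk'.2, le_rfl⟩
    · exact h τ ⟨hτ1, hτ⟩
  intro τ hτ'
  have hcyc : ∑ j ∈ Icc 1 n with turnAngle ψ k j ≤ turnAngle ψ k τ, c j
      = ∑ j ∈ Ioc k n, c j + ∑ j ∈ Icc 1 τ, c j := by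
    rcases lt_or_ge k τ with hkτ | hτk
    · have hsplit : ∀ m m', m ≤ m' →
          ∑ j ∈ Icc 1 m, c j + ∑ j ∈ Ioc m m', c j = ∑ j ∈ Icc 1 m', c j := fun m m' h => by
        rw [Icc_one_eq_Ioc_zero, Icc_one_eq_Ioc_zero, sum_Ioc_consecutive c (Nat.zero_le m) h]
      rw [filter_turnAngle_le_eq_Ioc hmono hturn hτ' hkτ]
      linarith [hsplit k n hk'.2, hsplit k τ hkτ.le]
    · rw [filter_turnAngle_le_eq_union hmono hturn hτ' hτk, sum_union (disjoint_left.mpr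
        fun j h1 h2 => by simp only [mem_Ioc, mem_Icc] at h1 h2; omega)]
  rw [← hcyc]
  simpa using sum_filter_mul_sin_nonneg (Icc 1 n) ℓ (turnAngle ψ k) hℓ
    (fun j hj => turnAngle_mem_Icc hmono hturn hk' (mem_Icc.mp hj)) (by simpa using htot)
    (turnAngle ψ k τ)

lemma sum_mul_sum_mul_sin_eq_zero
    (hclose : ∀ k ∈ Icc 1 n, ∑ j ∈ Icc 1 n, ℓ j * sin (ψ j - ψ k) = 0)
    {J : Finset ℕ} (hJ : J ⊆ Icc 1 n) :
    ∑ k ∈ Icc 1 n, ℓ k * ∑ j ∈ J, ℓ j * sin (ψ j - ψ k) = 0 := by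
  simp_rw [mul_sum]
  rw [sum_comm]
  refine sum_eq_zero fun j hj => ?_
  calc ∑ k ∈ Icc 1 n, ℓ k * (ℓ j * sin (ψ j - ψ k))
      = -(ℓ j * ∑ k ∈ Icc 1 n, ℓ k * sin (ψ k - ψ j)) := by
        rw [mul_sum, ← sum_neg_distrib]
        refine sum_congr rfl fun k _ => ?_
        rw [← neg_sub (ψ j), sin_neg]
        ring
    _ = 0 := by rw [hclose j (hJ hj), mul_zero, neg_zero]

lemma sin_sub_eq_zero_of_area_eq_zero (hmono : StrictMonoOn ψ (Set.Icc 1 n))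
    (hturn : ψ n - ψ 1 < 2 * π) (hℓ : ∀ j ∈ Icc 1 n, 0 ≤ ℓ j)
    (hclose : ∀ k ∈ Icc 1 n, ∑ j ∈ Icc 1 n, ℓ j * sin (ψ j - ψ k) = 0)
    (harea : ∑ k ∈ Icc 1 n, ℓ k * ∑ j ∈ Ioc k n, ℓ j * sin (ψ j - ψ k) = 0)
    {j k : ℕ} (hj : j ∈ Icc 1 n) (hk : k ∈ Icc 1 n) (hℓj : ℓ j ≠ 0) (hℓk : ℓ k ≠ 0) :
    sin (ψ j - ψ k) = 0 := by
  -- the products of `ℓ k` with the cyclic partial sums from `k` are `≥ 0` and add up to the area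
  have hcyc : ∀ τ ≤ n,
      ∑ i ∈ Ioc k n, ℓ i * sin (ψ i - ψ k) + ∑ i ∈ Icc 1 τ, ℓ i * sin (ψ i - ψ k) = 0 := by
    intro τ hτ
    have hsum : ∑ k ∈ Icc 1 n, ℓ k * (∑ i ∈ Ioc k n, ℓ i * sin (ψ i - ψ k)
        + ∑ i ∈ Icc 1 τ, ℓ i * sin (ψ i - ψ k)) = 0 := by
      simp_rw [mul_add]
      rw [sum_add_distrib, harea,
        sum_mul_sum_mul_sin_eq_zero hclose (Icc_subset_Icc le_rfl hτ), add_zero]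
    have hk0 := (sum_eq_zero_iff_of_nonneg fun i hi =>
      mul_nonneg (hℓ i hi) (sum_Ioc_add_sum_Icc_nonneg hmono hturn hℓ hclose hi hτ)).mp hsum k hk
    exact (mul_eq_zero.mp hk0).resolve_left hℓk
  obtain ⟨i, rfl⟩ : ∃ i, j = i + 1 := ⟨j - 1, by grind⟩
  have hi := hcyc (i + 1) (mem_Icc.mp hj).2
  rw [sum_Icc_succ_top (by omega), ← add_assoc, hcyc i (by grind), zero_add] at hi
  exact (mul_eq_zero.mp hi).resolve_left hℓj

lemma card_le_two_of_sin_sub_eq_zero (hmono : StrictMonoOn ψ (Set.Icc 1 n))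
    (hturn : ψ n - ψ 1 < 2 * π) {S : Finset ℕ} (hS : S ⊆ Icc 1 n)
    (hsin : ∀ j ∈ S, ∀ k ∈ S, sin (ψ j - ψ k) = 0) : #S ≤ 2 := by
  have hpi : ∀ j ∈ S, ∀ k ∈ S, k < j → ψ j - ψ k = π := fun j hj k hk hkj => by
    have hj' : j ∈ Set.Icc 1 n := mem_Icc.mp (hS hj)
    have hk' : k ∈ Set.Icc 1 n := mem_Icc.mp (hS hk)
    exact eq_pi_of_sin_eq_zero (sub_pos.mpr (hmono hk' hj' hkj))
      (sub_lt_two_pi hmono hturn hk' hj') (hsin j hj k hk)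
  have hpm : ∀ j ∈ S, ∀ k ∈ S, j ≠ k → ψ j - ψ k = π ∨ ψ j - ψ k = -π := fun j hj k hk hjk => by
    rcases lt_or_gt_of_ne hjk with h | h
    · right; linarith [hpi k hk j hj h]
    · left; exact hpi j hj k hk h
  by_contra! h
  obtain ⟨a, ha, b, hb, c, hc, hab, hac, hbc⟩ := two_lt_card.mp h
  rcases hpm a ha b hb hab with h1 | h1 <;> rcases hpm b hb c hc hbc with h2 | h2 <;>
    rcases hpm a ha c hc hac with h3 | h3 <;> linarith [pi_pos]

end ClosedPolygon

section Polygon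

variable {N : ℕ} {θ : ℕ → ℝ}

lemma phiAng_sub_phiAng (θ : ℕ → ℝ) {i j : ℕ} (h : i ≤ j) :
    phiAng θ j - phiAng θ i = ∑ t ∈ Ioc i j, θ t := by
  rw [phiAng, phiAng, Icc_one_eq_Ioc_zero, Icc_one_eq_Ioc_zero,
    ← sum_Ioc_consecutive θ (Nat.zero_le i) h, add_sub_cancel_left]

lemma phiAng_sub_phiAng_sub_one (θ : ℕ → ℝ) (hN : 1 ≤ N) :
    phiAng θ N - phiAng θ (N - 1) = θ N := by
  obtain ⟨n, rfl⟩ : ∃ n, N = n + 1 := ⟨N - 1, by omega⟩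
  rw [phiAng_sub_phiAng θ (by omega), Nat.add_sub_cancel, Nat.Ioc_succ_singleton, sum_singleton]

lemma strictMonoOn_phiAng (hθ : ∀ k, 1 ≤ k → k ≤ N → 0 < θ k) :
    StrictMonoOn (phiAng θ) (Set.Icc 0 N) := fun i _ j hj hij => by
  rw [← sub_pos, phiAng_sub_phiAng θ hij.le]
  exact sum_pos (fun t ht => hθ t (by grind) (by grind [hj.2])) ⟨j, by simp [hij]⟩

lemma phiAng_sub_phiAng_one_lt_two_pi (hθ : ∀ k, 1 ≤ k → k ≤ N → 0 < θ k)
    (hsum : ∑ k ∈ Icc 1 N, θ k = 2 * π) (hN : 1 ≤ N) : phiAng θ N - phiAng θ 1 < 2 * π := by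
  rw [show phiAng θ N = 2 * π from hsum, phiAng, Icc_self, sum_singleton]
  linarith [hθ 1 le_rfl hN]

lemma lamExt_of_le (hN : 2 ≤ N) (lam : ℕ → ℝ) {k : ℕ} (hk : k ≤ N - 2) :
    lamExt N θ lam k = lam k := by
  rw [lamExt, if_neg (by omega), if_neg (by omega)]

lemma lamExt_sub_one (lam : ℕ → ℝ) :
    lamExt N θ lam (N - 1) = ∑ j ∈ Icc 1 (N - 2), vvec N θ j * lam j := by
  rw [lamExt, if_pos rfl]

lemma lamExt_self (hN : 1 ≤ N) (lam : ℕ → ℝ) :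
    lamExt N θ lam N = ∑ j ∈ Icc 1 (N - 2), wvec N θ j * lam j := by
  rw [lamExt, if_neg (by omega), if_pos rfl]

-- `-vvec N θ j` and `-wvec N θ j` are the coordinates of the direction `φ_j` in the basis of
-- the directions `φ_{N-1}`, `φ_N`.
lemma sin_sub_add_vvec_mul_add_wvec_mul (hN : 1 ≤ N) (hs : sin (θ N) ≠ 0) (j : ℕ) (x : ℝ) :
    sin (phiAng θ j - x) + vvec N θ j * sin (phiAng θ (N - 1) - x)
      + wvec N θ j * sin (phiAng θ N - x) = 0 := by
  have h := sin_sub_mul_sin_sub_sub_sin_sub_mul_sin_sub (phiAng θ N) (phiAng θ (N - 1)) x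
    (phiAng θ j)
  rw [phiAng_sub_phiAng_sub_one θ hN] at h
  rw [vvec, wvec]
  field_simp
  linear_combination -h

lemma sin_sub_eq_mul_vvec_mul_wvec_sub (hN : 1 ≤ N) (hs : sin (θ N) ≠ 0) (j k : ℕ) :
    sin (phiAng θ k - phiAng θ j)
      = sin (θ N) * (vvec N θ j * wvec N θ k - vvec N θ k * wvec N θ j) := by
  have h := sin_sub_mul_sin_sub_sub_sin_sub_mul_sin_sub (phiAng θ N) (phiAng θ (N - 1))
    (phiAng θ j) (phiAng θ k)
  rw [phiAng_sub_phiAng_sub_one θ hN] at h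
  rw [vvec, vvec, wvec, wvec]
  field_simp
  linear_combination -h

lemma sum_Icc_one_eq_add_add (hN : 2 ≤ N) (f : ℕ → ℝ) :
    ∑ k ∈ Icc 1 N, f k = ∑ k ∈ Icc 1 (N - 2), f k + f (N - 1) + f N := by
  obtain ⟨n, rfl⟩ : ∃ n, N = n + 2 := ⟨N - 2, by omega⟩
  rw [sum_Icc_succ_top (by omega), sum_Icc_succ_top (by omega)]
  rfl

lemma sum_lamExt_mul_sin_sub_eq_zero (hN : 2 ≤ N) (hs : sin (θ N) ≠ 0) (lam : ℕ → ℝ) (x : ℝ) :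
    ∑ k ∈ Icc 1 N, lamExt N θ lam k * sin (phiAng θ k - x) = 0 := by
  rw [sum_Icc_one_eq_add_add hN, lamExt_sub_one, lamExt_self (by omega), sum_mul, sum_mul,
    ← sum_add_distrib, ← sum_add_distrib]
  refine sum_eq_zero fun j hj => ?_
  rw [lamExt_of_le hN lam (mem_Icc.mp hj).2]
  linear_combination lam j * sin_sub_add_vvec_mul_add_wvec_mul (by omega) hs j x

lemma lamExt_eq_of_sum_mul_sin_sub_eq_zero (hN : 2 ≤ N) (hs : sin (θ N) ≠ 0) {lam μ : ℕ → ℝ}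
    (hlam : ∀ j ∈ Icc 1 (N - 2), lam j = μ j)
    (hμ : ∀ x, ∑ k ∈ Icc 1 N, μ k * sin (phiAng θ k - x) = 0) {k : ℕ} (hk : k ∈ Icc 1 N) :
    lamExt N θ lam k = μ k := by
  have hlow : ∀ j ∈ Icc 1 (N - 2), lamExt N θ lam j = μ j := fun j hj => by
    rw [← hlam j hj]; exact lamExt_of_le hN lam (mem_Icc.mp hj).2
  have hdiff : ∀ x, (μ (N - 1) - lamExt N θ lam (N - 1)) * sin (phiAng θ (N - 1) - x)
      + (μ N - lamExt N θ lam N) * sin (phiAng θ N - x) = 0 := fun x => by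
    have hℓ := sum_lamExt_mul_sin_sub_eq_zero hN hs lam x
    have hμx := hμ x
    rw [sum_Icc_one_eq_add_add hN] at hℓ hμx
    rw [sum_congr rfl fun j hj => by rw [hlow j hj]] at hℓ
    linear_combination hμx - hℓ
  have hθN : phiAng θ N - phiAng θ (N - 1) = θ N := phiAng_sub_phiAng_sub_one θ (by omega)
  have h1 := hdiff (phiAng θ N)
  have h2 := hdiff (phiAng θ (N - 1))
  rw [← neg_sub (phiAng θ N), hθN, sin_neg, sub_self, sin_zero] at h1
  rw [sub_self, sin_zero, hθN] at h2
  rcases (by grind : k ≤ N - 2 ∨ k = N - 1 ∨ k = N) with hk' | hk' | hk'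
  · exact hlow k (mem_Icc.mpr ⟨(mem_Icc.mp hk).1, hk'⟩)
  · rw [hk']
    have := (mul_eq_zero.mp (by linear_combination -h1 :
      (μ (N - 1) - lamExt N θ lam (N - 1)) * sin (θ N) = 0)).resolve_right hs
    linarith
  · rw [hk']
    have := (mul_eq_zero.mp (by linear_combination h2 :
      (μ N - lamExt N θ lam N) * sin (θ N) = 0)).resolve_right hs
    linarith

lemma Qform_eq (hs : sin (θ N) ≠ 0) (lam : ℕ → ℝ) :
    Qform N θ lam = sin (θ N) *
      (2⁻¹ * ∑ j ∈ Icc 1 (N - 2), vvec N θ j * lam j * (wvec N θ j * lam j)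
        + ∑ j ∈ Icc 1 (N - 2), ∑ k ∈ Ioc j (N - 2), vvec N θ j * lam j * (wvec N θ k * lam k)) := by
  have hD : ∑ j ∈ Icc 1 (N - 2), sin (phiAng θ N - phiAng θ j)
      * sin (phiAng θ (N - 1) - phiAng θ j) / sin (θ N) * lam j ^ 2
      = -sin (θ N) * ∑ j ∈ Icc 1 (N - 2), vvec N θ j * lam j * (wvec N θ j * lam j) := by
    rw [neg_mul, mul_sum, ← sum_neg_distrib]
    refine sum_congr rfl fun j _ => ?_
    rw [vvec, wvec]
    field_simp
  have hU : ∑ j ∈ Icc 1 (N - 2), ∑ k ∈ Icc (j + 1) (N - 2), sin (phiAng θ N - phiAng θ j)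
      * sin (phiAng θ (N - 1) - phiAng θ k) / sin (θ N) * (lam j * lam k)
      = -sin (θ N) * ∑ j ∈ Icc 1 (N - 2), ∑ k ∈ Ioc j (N - 2),
          vvec N θ j * lam j * (wvec N θ k * lam k) := by
    rw [neg_mul, mul_sum, ← sum_neg_distrib]
    refine sum_congr rfl fun j _ => ?_
    rw [Icc_add_one_left_eq_Ioc, mul_sum, ← sum_neg_distrib]
    refine sum_congr rfl fun k _ => ?_
    rw [vvec, wvec]
    field_simp
  rw [Qform, hD, hU]
  ring

lemma sum_lamExt_mul_sum_Ioc_eq (hN : 2 ≤ N) (hs : sin (θ N) ≠ 0) (lam : ℕ → ℝ) :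
    ∑ k ∈ Icc 1 N, lamExt N θ lam k *
      ∑ j ∈ Ioc k N, lamExt N θ lam j * sin (phiAng θ j - phiAng θ k)
      = ∑ k ∈ Icc 1 (N - 2), lam k * ∑ j ∈ Ioc k (N - 2), lam j * sin (phiAng θ j - phiAng θ k)
        + sin (θ N) * (lamExt N θ lam (N - 1) * lamExt N θ lam N) := by
  obtain ⟨n, rfl⟩ : ∃ n, N = n + 2 := ⟨N - 2, by omega⟩
  have e1 : n + 2 - 1 = n + 1 := rfl
  have e2 : n + 2 - 2 = n := rfl
  set ℓ := lamExt (n + 2) θ lam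
  have hv : ℓ (n + 1) = ∑ k ∈ Icc 1 n, vvec (n + 2) θ k * lam k := lamExt_sub_one lam
  have hw : ℓ (n + 2) = ∑ k ∈ Icc 1 n, wvec (n + 2) θ k * lam k := lamExt_self (by omega) lam
  have hθ : phiAng θ (n + 2) - phiAng θ (n + 1) = θ (n + 2) :=
    phiAng_sub_phiAng_sub_one θ (by omega : 1 ≤ n + 2)
  have hlow : ∀ j ∈ Icc 1 n, ℓ j = lam j := fun j hj => lamExt_of_le hN lam (mem_Icc.mp hj).2
  have hinner : ∀ k ∈ Icc 1 n,
      ℓ k * ∑ j ∈ Ioc k (n + 2), ℓ j * sin (phiAng θ j - phiAng θ k)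
        = lam k * ∑ j ∈ Ioc k n, lam j * sin (phiAng θ j - phiAng θ k)
          + sin (θ (n + 2)) * (ℓ (n + 1) * (wvec (n + 2) θ k * lam k)
            - ℓ (n + 2) * (vvec (n + 2) θ k * lam k)) := fun k hk => by
    rw [sum_Ioc_succ_top (by grind), sum_Ioc_succ_top (by grind), hlow k hk,
      sum_congr rfl fun j hj => by rw [hlow j (mem_Icc.mpr (by grind))], vvec, wvec, e1]
    field_simp
    ring
  have hcancel : ∑ k ∈ Icc 1 n, sin (θ (n + 2)) * (ℓ (n + 1) * (wvec (n + 2) θ k * lam k)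
      - ℓ (n + 2) * (vvec (n + 2) θ k * lam k)) = 0 := by
    rw [← mul_sum, sum_sub_distrib, ← mul_sum, ← mul_sum, ← hv, ← hw, mul_comm (ℓ (n + 1)),
      sub_self, mul_zero]
  rw [sum_Icc_one_eq_add_add hN, e1, e2, sum_congr rfl hinner, sum_add_distrib, hcancel,
    Nat.Ioc_succ_singleton, sum_singleton, Ioc_self, sum_empty, mul_zero, add_zero, add_zero]
  rw [show n + 1 + 1 = n + 2 from rfl, hθ]
  ring

lemma two_mul_Qform (hN : 2 ≤ N) (hs : sin (θ N) ≠ 0) (lam : ℕ → ℝ) :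
    2 * Qform N θ lam = ∑ k ∈ Icc 1 N, lamExt N θ lam k *
      ∑ j ∈ Ioc k N, lamExt N θ lam j * sin (phiAng θ j - phiAng θ k) := by
  have hT : ∑ k ∈ Icc 1 (N - 2), lam k * ∑ j ∈ Ioc k (N - 2), lam j * sin (phiAng θ j - phiAng θ k)
      = sin (θ N) * ∑ k ∈ Icc 1 (N - 2), ∑ j ∈ Ioc k (N - 2),
        (vvec N θ k * lam k * (wvec N θ j * lam j)
          - vvec N θ j * lam j * (wvec N θ k * lam k)) := by
    rw [mul_sum]
    refine sum_congr rfl fun k _ => ?_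
    rw [mul_sum, mul_sum]
    refine sum_congr rfl fun j _ => ?_
    rw [sin_sub_eq_mul_vvec_mul_wvec_sub (by omega) hs k j]
    ring
  simp only [sum_sub_distrib] at hT
  have hprod := sum_mul_sum_eq_sum_add_sum_sum_Ioc (fun j => vvec N θ j * lam j)
    (fun j => wvec N θ j * lam j) (N - 2)
  simp only [sum_add_distrib] at hprod
  rw [sum_lamExt_mul_sum_Ioc_eq hN hs, Qform_eq hs, hT, lamExt_sub_one, lamExt_self (by omega),
    hprod]
  ring

lemma sin_sub_eq_zero_of_mem_Vface (hN : 2 ≤ N) (hs : sin (θ N) ≠ 0) {a b : ℕ}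
    (ha : a ∈ Icc 1 N) (hb : b ∈ Icc 1 N) (hab : a ≠ b) {lam : ℕ → ℝ}
    (hlam : lam ∈ Vface N θ (Icc 1 N \ {a, b})) (hlam0 : lam ≠ 0) :
    sin (phiAng θ b - phiAng θ a) = 0 := by
  obtain ⟨hsupp, hzero⟩ := hlam
  obtain ⟨i, hi⟩ : ∃ i, lam i ≠ 0 := by
    by_contra! h
    exact hlam0 (funext h)
  have hiI : i ∈ Icc 1 (N - 2) := by
    by_contra h
    exact hi (hsupp i h)
  have hℓi : lamExt N θ lam i ≠ 0 := by rwa [lamExt_of_le hN lam (mem_Icc.mp hiI).2]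
  have hpair : ∀ x, lamExt N θ lam a * sin (phiAng θ a - x)
      + lamExt N θ lam b * sin (phiAng θ b - x) = 0 := fun x => by
    rw [← sum_pair (f := fun k => lamExt N θ lam k * sin (phiAng θ k - x)) hab,
      ← sum_lamExt_mul_sin_sub_eq_zero hN hs lam x]
    refine sum_subset (by grind) fun k hk hkab => ?_
    rw [hzero k (mem_sdiff.mpr ⟨hk, hkab⟩), zero_mul]
  have ha0 := hpair (phiAng θ a)
  have hb0 := hpair (phiAng θ b)
  rw [sub_self, sin_zero, mul_zero, zero_add] at ha0
  rw [sub_self, sin_zero, mul_zero, add_zero, ← neg_sub, sin_neg, mul_neg, neg_eq_zero] at hb0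
  have hiab : i = a ∨ i = b := by
    by_contra! h
    exact hℓi (hzero i (by grind))
  rcases hiab with rfl | rfl
  · exact (mul_eq_zero.mp hb0).resolve_left hℓi
  · exact (mul_eq_zero.mp ha0).resolve_left hℓi

lemma exists_ne_zero_mem_Dzero_inter_Fface (hN : 2 ≤ N) (hs : sin (θ N) ≠ 0) {a b : ℕ}
    (ha : 1 ≤ a) (hab : a + 1 < b) (hb : b ≤ N) (hpi : phiAng θ b - phiAng θ a = π) :
    ∃ lam ∈ Dzero N θ ∩ Fface N θ (Icc 1 N \ {a, b}), lam ≠ 0 := by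
  set μ : ℕ → ℝ := fun k => if k ∈ ({a, b} : Finset ℕ) then 1 else 0 with hμ_def
  have hμ : ∀ x, ∑ k ∈ Icc 1 N, μ k * sin (phiAng θ k - x) = 0 := fun x => by
    simp only [hμ_def, ite_mul, one_mul, zero_mul]
    rw [sum_ite_mem, inter_eq_right.mpr (by grind), sum_pair (by omega),
      show phiAng θ b = phiAng θ a + π by linarith, add_sub_right_comm, sin_add_pi, add_neg_cancel]
  set lam : ℕ → ℝ := fun j => if j ∈ Icc 1 (N - 2) then μ j else 0
  have hext : ∀ k ∈ Icc 1 N, lamExt N θ lam k = μ k :=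
    fun k hk => lamExt_eq_of_sum_mul_sin_sub_eq_zero hN hs (fun j hj => if_pos hj) hμ hk
  have hsupp : suppOK N lam := fun k hk => if_neg hk
  have hQ : Qform N θ lam = 0 := by
    suffices h : ∑ k ∈ Icc 1 N, lamExt N θ lam k *
        ∑ j ∈ Ioc k N, lamExt N θ lam j * sin (phiAng θ j - phiAng θ k) = 0 by
      linarith [two_mul_Qform hN hs lam]
    refine sum_eq_zero fun k hk => ?_
    rw [mul_sum]
    refine sum_eq_zero fun j hj => ?_
    have hkj := (mem_Ioc.mp hj).1
    rw [hext k hk, hext j (by grind)]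
    simp only [hμ_def, mem_insert, mem_singleton]
    split_ifs with hk' hj'
    · rw [show k = a by omega, show j = b by omega, hpi, sin_pi, mul_zero, mul_zero]
    all_goals simp
  refine ⟨lam, ⟨⟨hsupp, hQ⟩, ⟨hsupp, fun j hj => ?_⟩, hsupp, Or.inl fun k h1 h2 => ?_⟩, ?_⟩
  · rw [hext j (mem_sdiff.mp hj).1]
    exact if_neg (mem_sdiff.mp hj).2
  · rw [hext k (mem_Icc.mpr ⟨h1, h2⟩)]
    positivity
  · intro h
    have := congrFun h a
    simp [lam, hμ_def] at this
    omega

lemma sin_sub_eq_zero_of_mem_Dzero_inter_DeltaBar (hN : 2 ≤ N)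
    (hθ : ∀ k, 1 ≤ k → k ≤ N → 0 < θ k) (hsum : ∑ k ∈ Icc 1 N, θ k = 2 * π)
    (hs : sin (θ N) ≠ 0) {lam : ℕ → ℝ} (hlam : lam ∈ Dzero N θ ∩ DeltaBar N θ) {j k : ℕ}
    (hj : j ∈ Icc 1 N) (hk : k ∈ Icc 1 N) (hj0 : lamExt N θ lam j ≠ 0)
    (hk0 : lamExt N θ lam k ≠ 0) : sin (phiAng θ j - phiAng θ k) = 0 := by
  obtain ⟨⟨-, hQ⟩, -, hcone⟩ := hlam
  have hmono := (strictMonoOn_phiAng hθ).mono (Set.Icc_subset_Icc_left zero_le_one)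
  have hturn := phiAng_sub_phiAng_one_lt_two_pi hθ hsum (by omega)
  have hclose : ∀ k ∈ Icc 1 N,
      ∑ j ∈ Icc 1 N, lamExt N θ lam j * sin (phiAng θ j - phiAng θ k) = 0 :=
    fun k _ => sum_lamExt_mul_sin_sub_eq_zero hN hs lam _
  have harea := two_mul_Qform hN hs lam
  rw [hQ, mul_zero, eq_comm] at harea
  rcases hcone with hpos | hneg
  · exact sin_sub_eq_zero_of_area_eq_zero hmono hturn (fun i hi => hpos i (mem_Icc.mp hi).1
      (mem_Icc.mp hi).2) hclose harea hj hk hj0 hk0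
  · refine sin_sub_eq_zero_of_area_eq_zero (ℓ := fun i => -lamExt N θ lam i) hmono hturn
      (fun i hi => neg_nonneg.mpr (hneg i (mem_Icc.mp hi).1 (mem_Icc.mp hi).2)) ?_ ?_ hj hk
      (neg_ne_zero.mpr hj0) (neg_ne_zero.mpr hk0)
    · simpa [neg_mul, sum_neg_distrib] using hclose
    · simpa [neg_mul, mul_neg, sum_neg_distrib] using harea

lemma Dzero_inter_DeltaBar_eq_iUnion (hN : 2 ≤ N) (hθ : ∀ k, 1 ≤ k → k ≤ N → θ k ∈ Set.Ioo 0 π)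
    (hsum : ∑ k ∈ Icc 1 N, θ k = 2 * π) :
    Dzero N θ ∩ DeltaBar N θ = ⋃ (I : Finset ℕ) (_ : I ⊆ Icc 1 N ∧ #I = N - 2),
      Dzero N θ ∩ Fface N θ I := by
  have hpos : ∀ k, 1 ≤ k → k ≤ N → 0 < θ k := fun k h1 h2 => (hθ k h1 h2).1
  have hs : sin (θ N) ≠ 0 := (sin_pos_of_pos_of_lt_pi (hθ N (by omega) le_rfl).1
    (hθ N (by omega) le_rfl).2).ne'
  refine Set.Subset.antisymm (fun lam hlam => ?_)
    (Set.iUnion₂_subset fun I _ => Set.inter_subset_inter_right _ Set.inter_subset_right)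
  set S := {k ∈ Icc 1 N | lamExt N θ lam k ≠ 0}
  have hS : #S ≤ 2 := card_le_two_of_sin_sub_eq_zero
    ((strictMonoOn_phiAng hpos).mono (Set.Icc_subset_Icc_left zero_le_one))
    (phiAng_sub_phiAng_one_lt_two_pi hpos hsum (by omega)) (filter_subset _ _)
    fun j hj k hk => sin_sub_eq_zero_of_mem_Dzero_inter_DeltaBar hN hpos hsum hs hlam
      (mem_filter.mp hj).1 (mem_filter.mp hk).1 (mem_filter.mp hj).2 (mem_filter.mp hk).2
  obtain ⟨I, hI, hIcard⟩ := exists_subset_card_eq (s := Icc 1 N \ S) (n := N - 2) (by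
    rw [card_sdiff_of_subset (filter_subset _ _), Nat.card_Icc]
    exact Nat.sub_le_sub_left hS _ |>.trans_eq' (by omega))
  refine Set.mem_iUnion₂.mpr ⟨I, ⟨hI.trans sdiff_subset, hIcard⟩, hlam.1,
    ⟨hlam.1.1, fun j hj => ?_⟩, hlam.2⟩
  obtain ⟨hjN, hjS⟩ := mem_sdiff.mp (hI hj)
  by_contra h
  exact hjS (mem_filter.mpr ⟨hjN, h⟩)

lemma Dzero_inter_Fface_ne_singleton_iff (hN : 2 ≤ N)
    (hθ : ∀ k, 1 ≤ k → k ≤ N → θ k ∈ Set.Ioo 0 π) (hsum : ∑ k ∈ Icc 1 N, θ k = 2 * π)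
    {a b : ℕ} (ha : 1 ≤ a) (hab : a < b) (hb : b ≤ N) :
    Dzero N θ ∩ Fface N θ (Icc 1 N \ {a, b}) ≠ {0} ↔
      (b - a ≠ 1 ∧ b - a ≠ N - 1) ∧ sin (phiAng θ b - phiAng θ a) = 0 := by
  have hpos : ∀ k, 1 ≤ k → k ≤ N → 0 < θ k := fun k h1 h2 => (hθ k h1 h2).1
  have hs : sin (θ N) ≠ 0 := (sin_pos_of_pos_of_lt_pi (hθ N (by omega) le_rfl).1
    (hθ N (by omega) le_rfl).2).ne'
  have ha' : a ∈ Icc 1 N := mem_Icc.mpr ⟨ha, by omega⟩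
  have hb' : b ∈ Icc 1 N := mem_Icc.mpr ⟨by omega, hb⟩
  have hpi : sin (phiAng θ b - phiAng θ a) = 0 ↔ phiAng θ b - phiAng θ a = π := by
    have hmono := (strictMonoOn_phiAng hpos).mono (Set.Icc_subset_Icc_left zero_le_one)
    refine ⟨eq_pi_of_sin_eq_zero (sub_pos.mpr (hmono (mem_Icc.mp ha') (mem_Icc.mp hb') hab))
      (sub_lt_two_pi hmono (phiAng_sub_phiAng_one_lt_two_pi hpos hsum (by omega))
        (mem_Icc.mp ha') (mem_Icc.mp hb')), fun h => by rw [h, sin_pi]⟩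
  have h0 : (0 : ℕ → ℝ) ∈ Dzero N θ ∩ Fface N θ (Icc 1 N \ {a, b}) := by
    have hz : ∀ k, lamExt N θ 0 k = 0 := fun k => by simp [lamExt]
    exact ⟨⟨fun _ _ => rfl, by simp [Qform]⟩, ⟨fun _ _ => rfl, fun j _ => hz j⟩,
      fun _ _ => rfl, Or.inl fun k _ _ => (hz k).ge⟩
  rw [Ne, ← (Set.nonempty_of_mem h0).subset_singleton_iff, Set.subset_singleton_iff]
  push Not
  constructor
  · rintro ⟨lam, hlam, hlam0⟩
    have hsin := sin_sub_eq_zero_of_mem_Vface hN hs ha' hb' hab.ne hlam.2.1 hlam0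
    refine ⟨⟨fun h => ?_, fun h => ?_⟩, hsin⟩
    · have hθb := phiAng_sub_phiAng_sub_one θ (N := b) (by omega)
      rw [show b - 1 = a by omega, hpi.mp hsin] at hθb
      linarith [(hθ b (by omega) hb).2]
    · obtain ⟨rfl, rfl⟩ : a = 1 ∧ b = N := by omega
      have hθ1 := hpi.mp hsin
      rw [show phiAng θ b = 2 * π from hsum, phiAng, Icc_self, sum_singleton] at hθ1
      linarith [(hθ 1 le_rfl (by omega)).2]
  · rintro ⟨⟨hadj, -⟩, hsin⟩
    exact exists_ne_zero_mem_Dzero_inter_Fface hN hs ha (by omega) hb (hpi.mp hsin)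

end Polygon

/-- Structure of isotropic vectors in `Δ̄`: `D_0 ∩ Δ̄` is covered by the faces `F_I` with
`|I| = N-2`, and such a face meets `D_0` nontrivially exactly when the two omitted indices
are not cyclically adjacent and `sin(φ_b - φ_a) = 0`. -/
theorem stmt6 (N : ℕ) (hN : 5 ≤ N) (θ : ℕ → ℝ)
    (hθ : ∀ k, 1 ≤ k → k ≤ N → θ k ∈ Set.Ioo 0 Real.pi)
    (hsum : ∑ k ∈ Finset.Icc 1 N, θ k = 2 * Real.pi) :
    (Dzero N θ ∩ DeltaBar N θ
        = ⋃ (I : Finset ℕ) (_ : I ⊆ Finset.Icc 1 N ∧ I.card = N - 2),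
            Dzero N θ ∩ Fface N θ I) ∧
    ∀ a b : ℕ, 1 ≤ a → a < b → b ≤ N →
      (Dzero N θ ∩ Fface N θ (Finset.Icc 1 N \ {a, b}) ≠ {0} ↔
        (b - a ≠ 1 ∧ b - a ≠ N - 1) ∧ Real.sin (phiAng θ b - phiAng θ a) = 0) :=
  ⟨Dzero_inter_DeltaBar_eq_iUnion (by omega) hθ hsum,
    fun _ _ ha hab hb => Dzero_inter_Fface_ne_singleton_iff (by omega) hθ hsum ha hab hb⟩
end

section
/- Assume the positivity condition θ_k ∈ (0,π) for all 1 ≤ k ≤ N with ∑_{k=1}^N θ_k = 2π. Then the following are equivalent: (1) for all 1 ≤ j, k ≤ N−2 there exist integers p, q, not both zero, such that p·sin(φ_N−φ_j)·sin(φ_{N−1}−φ_k) = q·sin(φ_N−φ_k)·sin(φ_{N−1}−φ_j) (i.e., the ratio sin(φ_N−φ_k)sin(φ_{N−1}−φ_j) / (sin(φ_N−φ_j)sin(φ_{N−1}−φ_k)) lies in ℚ ∪ {∞}); (2) there exist nonzero real numbers ε_1,…,ε_{N−2}, ε_{N−1}, ε_N such that v_j·ε_j/ε_{N−1} ∈ ℤ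 and w_j·ε_j/ε_N ∈ ℤ for all 1 ≤ j ≤ N−2. -/
/-!
Since `v_j w_k = -sin(φ_N-φ_j) sin(φ_{N-1}-φ_k) / sin² θ_N`, condition (1) says that all cross
ratios `v_j w_k / (v_k w_j)` lie in `ℚ ∪ {∞}`. Rescaling `w` by `v_{j₀} / w_{j₀}` for one index
where both are nonzero makes every ratio `v_j / w_j` rational, so each point `(v_j, c w_j)` has a
nonzero real multiple `ε_j (v_j, c w_j)` in `ℤ²`. Conversely, integrality of `v_j ε_j / ε_{N-1}`
and `w_j ε_j / ε_N` writes each cross ratio as a quotient of integers. The points `(v_j, w_j)`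
never vanish, since `sin θ_N = sin((φ_N - φ_j) - (φ_{N-1} - φ_j)) ≠ 0`.
-/

/-- For `y ≠ 0` this says `x / y ∈ ℚ`. -/
def IntDependent (x y : ℝ) : Prop :=
  ∃ p q : ℤ, ¬(p = 0 ∧ q = 0) ∧ (p : ℝ) * x = q * y

namespace IntDependent

theorem zero_left (y : ℝ) : IntDependent 0 y :=
  ⟨1, 0, by simp, by simp⟩

theorem zero_right (x : ℝ) : IntDependent x 0 :=
  ⟨0, 1, by simp, by simp⟩

theorem mul_left_iff {a : ℝ} (ha : a ≠ 0) {x y : ℝ} :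
    IntDependent (a * x) (a * y) ↔ IntDependent x y := by
  refine exists₂_congr fun p q => and_congr_right fun _ => ?_
  rw [mul_left_comm, mul_left_comm (q : ℝ), mul_right_inj' ha]

theorem of_mul_eq_int {x y r : ℝ} (hr : r ≠ 0) {m n : ℤ} (hx : x * r = m) (hy : y * r = n) :
    IntDependent x y := by
  by_cases hmn : m = 0 ∧ n = 0
  · obtain ⟨rfl, rfl⟩ := hmn
    have hx0 : x = 0 := by simpa [hr] using hx
    have hy0 : y = 0 := by simpa [hr] using hy
    exact ⟨1, 1, by simp, by simp [hx0, hy0]⟩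
  · refine ⟨n, m, fun h => hmn h.symm, mul_right_cancel₀ hr ?_⟩
    rw [mul_assoc, mul_assoc, hx, hy, mul_comm]

theorem exists_mul_eq_int {x y : ℝ} (hxy : x ≠ 0 ∨ y ≠ 0) (h : IntDependent x y) :
    ∃ e ≠ 0, (∃ z : ℤ, x * e = z) ∧ ∃ z : ℤ, y * e = z := by
  obtain ⟨p, q, hpq, hxy'⟩ := h
  by_cases hy : y = 0
  · have hx : x ≠ 0 := hxy.resolve_right (not_not.2 hy)
    have hp : p = 0 := by simpa [hy, hx] using hxy'
    have hq : (q : ℝ) ≠ 0 := Int.cast_ne_zero.2 fun hq => hpq ⟨hp, hq⟩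
    exact ⟨q / x, div_ne_zero hq hx, ⟨q, by field_simp⟩, ⟨0, by simp [hy]⟩⟩
  · have hp : (p : ℝ) ≠ 0 := by
      refine Int.cast_ne_zero.2 fun hp => hpq ⟨hp, ?_⟩
      simpa [hp, hy] using hxy'
    refine ⟨p / y, div_ne_zero hp hy, ⟨q, ?_⟩, ⟨p, by field_simp⟩⟩
    field_simp
    linear_combination hxy'

end IntDependent

section Rescaling

variable {ι : Type*} {s : Set ι} {v w : ι → ℝ}

/-- The scale is `v j₀ / w j₀` at an index where both are nonzero, if there is one. -/
theorem exists_forall_intDependent_mul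
    (h : ∀ j ∈ s, ∀ k ∈ s, IntDependent (v j * w k) (v k * w j)) :
    ∃ c ≠ 0, ∀ j ∈ s, IntDependent (v j) (c * w j) := by
  by_cases hj₀ : ∃ j₀ ∈ s, v j₀ ≠ 0 ∧ w j₀ ≠ 0
  · obtain ⟨j₀, hj₀, hv₀, hw₀⟩ := hj₀
    refine ⟨v j₀ / w j₀, div_ne_zero hv₀ hw₀, fun j hj => ?_⟩
    rw [← IntDependent.mul_left_iff hw₀]
    convert h j hj j₀ hj₀ using 1 <;> field_simp
  · push Not at hj₀
    refine ⟨1, one_ne_zero, fun j hj => ?_⟩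
    by_cases hv : v j = 0
    · rw [hv]
      exact IntDependent.zero_left _
    · rw [hj₀ j hj hv, mul_zero]
      exact IntDependent.zero_right _

theorem exists_rescaling_of_forall_intDependent (hvw : ∀ j ∈ s, v j ≠ 0 ∨ w j ≠ 0)
    (h : ∀ j ∈ s, ∀ k ∈ s, IntDependent (v j * w k) (v k * w j)) :
    ∃ c ≠ 0, ∃ e : ι → ℝ, ∀ j ∈ s,
      e j ≠ 0 ∧ (∃ z : ℤ, v j * e j = z) ∧ ∃ z : ℤ, c * w j * e j = z := by
  obtain ⟨c, hc, hvcw⟩ := exists_forall_intDependent_mul h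
  have he : ∀ j, ∃ e : ℝ, j ∈ s →
      e ≠ 0 ∧ (∃ z : ℤ, v j * e = z) ∧ ∃ z : ℤ, c * w j * e = z := by
    intro j
    by_cases hj : j ∈ s
    · have hne : v j ≠ 0 ∨ c * w j ≠ 0 := (hvw j hj).imp_right (mul_ne_zero hc)
      obtain ⟨e, he, hint⟩ := (hvcw j hj).exists_mul_eq_int hne
      exact ⟨e, fun _ => ⟨he, hint⟩⟩
    · exact ⟨0, fun h => absurd h hj⟩
  choose e he using he
  exact ⟨c, hc, e, fun j hj => he j hj⟩

theorem intDependent_of_exists_int {e : ι → ℝ} {α β : ℝ} {j k : ι} (hα : α ≠ 0) (hβ : β ≠ 0)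
    (hej : e j ≠ 0) (hek : e k ≠ 0)
    (hj : (∃ z : ℤ, v j * e j / α = z) ∧ ∃ z : ℤ, w j * e j / β = z)
    (hk : (∃ z : ℤ, v k * e k / α = z) ∧ ∃ z : ℤ, w k * e k / β = z) :
    IntDependent (v j * w k) (v k * w j) := by
  obtain ⟨⟨mj, hmj⟩, ⟨nj, hnj⟩⟩ := hj
  obtain ⟨⟨mk, hmk⟩, ⟨nk, hnk⟩⟩ := hk
  refine IntDependent.of_mul_eq_int (r := e j * e k / (α * β))
    (div_ne_zero (mul_ne_zero hej hek) (mul_ne_zero hα hβ)) (m := mj * nk) (n := mk * nj) ?_ ?_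
  · push_cast
    rw [← hmj, ← hnk]
    ring
  · push_cast
    rw [← hmk, ← hnj]
    ring

end Rescaling

theorem Real.sin_ne_zero_or_sin_ne_zero_of_sin_sub_ne_zero {a b : ℝ}
    (h : Real.sin (a - b) ≠ 0) : Real.sin a ≠ 0 ∨ Real.sin b ≠ 0 := by
  by_contra! hab
  rw [Real.sin_sub, hab.1, hab.2] at h
  simp at h

theorem phiAng_succ (θ : ℕ → ℝ) (n : ℕ) : phiAng θ (n + 1) = phiAng θ n + θ (n + 1) :=
  Finset.sum_Icc_succ_top (Nat.le_add_left 1 n) θ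

section Polygon

variable {N : ℕ} {θ : ℕ → ℝ}

theorem vvec_ne_zero_or_wvec_ne_zero (hN : 1 ≤ N) (hd : Real.sin (θ N) ≠ 0) (j : ℕ) :
    vvec N θ j ≠ 0 ∨ wvec N θ j ≠ 0 := by
  have hsub : (phiAng θ N - phiAng θ j) - (phiAng θ (N - 1) - phiAng θ j) = θ N := by
    obtain ⟨n, rfl⟩ := Nat.exists_eq_add_of_le' hN
    rw [Nat.add_sub_cancel, phiAng_succ]
    ring
  exact (Real.sin_ne_zero_or_sin_ne_zero_of_sin_sub_ne_zero (hsub ▸ hd)).imp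
    (fun h => div_ne_zero (neg_ne_zero.2 h) hd) (fun h => div_ne_zero h hd)

theorem sin_mul_sin_eq_neg_sq_mul_vvec_mul_wvec (hd : Real.sin (θ N) ≠ 0) (j k : ℕ) :
    Real.sin (phiAng θ N - phiAng θ j) * Real.sin (phiAng θ (N - 1) - phiAng θ k)
      = -Real.sin (θ N) ^ 2 * (vvec N θ j * wvec N θ k) := by
  simp only [vvec, wvec]
  field_simp

theorem intDependent_sin_mul_sin_iff (hd : Real.sin (θ N) ≠ 0) (j k : ℕ) :
    IntDependent
        (Real.sin (phiAng θ N - phiAng θ j) * Real.sin (phiAng θ (N - 1) - phiAng θ k))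
        (Real.sin (phiAng θ N - phiAng θ k) * Real.sin (phiAng θ (N - 1) - phiAng θ j))
      ↔ IntDependent (vvec N θ j * wvec N θ k) (vvec N θ k * wvec N θ j) := by
  rw [sin_mul_sin_eq_neg_sq_mul_vvec_mul_wvec hd, sin_mul_sin_eq_neg_sq_mul_vvec_mul_wvec hd,
    IntDependent.mul_left_iff (neg_ne_zero.2 (pow_ne_zero 2 hd))]

end Polygon

theorem stmt8_general (N : ℕ) (hN : 3 ≤ N) (θ : ℕ → ℝ)
    (hθ : ∀ k, 1 ≤ k → k ≤ N → θ k ∈ Set.Ioo 0 Real.pi) :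
    (∀ j k, 1 ≤ j → j ≤ N - 2 → 1 ≤ k → k ≤ N - 2 →
        ∃ p q : ℤ, ¬(p = 0 ∧ q = 0) ∧
          (p : ℝ) * (Real.sin (phiAng θ N - phiAng θ j) * Real.sin (phiAng θ (N-1) - phiAng θ k))
            = (q : ℝ) * (Real.sin (phiAng θ N - phiAng θ k) * Real.sin (phiAng θ (N-1) - phiAng θ j)))
      ↔ (∃ ε : ℕ → ℝ, (∀ k, 1 ≤ k → k ≤ N → ε k ≠ 0) ∧
          ∀ j, 1 ≤ j → j ≤ N - 2 →
            (∃ z : ℤ, vvec N θ j * ε j / ε (N-1) = (z : ℝ)) ∧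
            (∃ z : ℤ, wvec N θ j * ε j / ε N = (z : ℝ))) := by
  obtain ⟨hθ₀, hθπ⟩ := hθ N (by omega) le_rfl
  have hd : Real.sin (θ N) ≠ 0 := (Real.sin_pos_of_pos_of_lt_pi hθ₀ hθπ).ne'
  change (∀ j k, 1 ≤ j → j ≤ N - 2 → 1 ≤ k → k ≤ N - 2 → IntDependent _ _) ↔ _
  simp only [intDependent_sin_mul_sin_iff hd]
  constructor
  · intro h
    obtain ⟨c, hc, e, he⟩ := exists_rescaling_of_forall_intDependent (s := {j | 1 ≤ j ∧ j ≤ N - 2})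
      (fun j _ => vvec_ne_zero_or_wvec_ne_zero (by omega) hd j)
      (fun j hj k hk => h j k hj.1 hj.2 hk.1 hk.2)
    refine ⟨fun k => if k = N - 1 then 1 else if k = N then c⁻¹ else e k, fun k hk1 hkN => ?_,
      fun j hj1 hj2 => ?_⟩
    · dsimp only
      split_ifs
      · exact one_ne_zero
      · exact inv_ne_zero hc
      · exact (he k ⟨hk1, by omega⟩).1
    · obtain ⟨-, hv, hw⟩ := he j ⟨hj1, hj2⟩
      simp only [if_neg (show j ≠ N - 1 by omega), if_neg (show j ≠ N by omega),
        if_neg (show N ≠ N - 1 by omega), if_true, div_one, div_inv_eq_mul]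
      exact ⟨hv, by simpa only [mul_comm c, mul_right_comm] using hw⟩
  · rintro ⟨ε, hε, hint⟩ j k hj1 hj2 hk1 hk2
    exact intDependent_of_exists_int (hε _ (by omega) (by omega)) (hε N (by omega) le_rfl)
      (hε j hj1 (by omega)) (hε k hk1 (by omega)) (hint j hj1 hj2) (hint k hk1 hk2)

/-- Equivalence of the rationality conditions: all ratios
`sin(φ_N-φ_k)sin(φ_{N-1}-φ_j)/(sin(φ_N-φ_j)sin(φ_{N-1}-φ_k))` lie in `ℚ ∪ {∞}` if and only
if there are nonzero `ε_1,…,ε_N` with `v_j ε_j/ε_{N-1} ∈ ℤ` and `w_j ε_j/ε_N ∈ ℤ`. -/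
theorem stmt8 (N : ℕ) (hN : 3 ≤ N) (θ : ℕ → ℝ)
    (hθ : ∀ k, 1 ≤ k → k ≤ N → θ k ∈ Set.Ioo 0 Real.pi)
    (hsum : ∑ k ∈ Finset.Icc 1 N, θ k = 2 * Real.pi) :
    (∀ j k, 1 ≤ j → j ≤ N - 2 → 1 ≤ k → k ≤ N - 2 →
        ∃ p q : ℤ, ¬(p = 0 ∧ q = 0) ∧
          (p : ℝ) * (Real.sin (phiAng θ N - phiAng θ j) * Real.sin (phiAng θ (N-1) - phiAng θ k))
            = (q : ℝ) * (Real.sin (phiAng θ N - phiAng θ k) * Real.sin (phiAng θ (N-1) - phiAng θ j)))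
      ↔ (∃ ε : ℕ → ℝ, (∀ k, 1 ≤ k → k ≤ N → ε k ≠ 0) ∧
          ∀ j, 1 ≤ j → j ≤ N - 2 →
            (∃ z : ℤ, vvec N θ j * ε j / ε (N-1) = (z : ℝ)) ∧
            (∃ z : ℤ, wvec N θ j * ε j / ε N = (z : ℝ))) :=
  stmt8_general N hN θ hθ
end
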